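/- Let F be a finite field, let n, d, d' ≥ 1, and let ρ be a positive semidefinite d×d complex matrix with Tr ρ = 1. For each x ∈ F^n let σ_x be a positive semidefinite matrix on ℂ^d ⊗ ℂ^{d'} whose partial trace over the second factor equals ρ, let {A_x^a}_{a∈F} be a projective measurement on ℂ^d (orthogonal projections summing to Id), and let {V_x^a}_{a∈F} be positive semidefinite d×d matrices with Σ_{a∈F} V_x^a ≤ Id. Then E_{x∈F^n} Σ_{a∈F} ‖Tr₁[(A_x^a ⊗ Id) σ_x (A_x^a ⊗ Id)] − Tr₁[(√(V_x^a) ⊗ Id) σ_x (√(V_x^a) ⊗ Id)]‖₁ ≤ 2 √(E_{x∈F^n} Σ_{a∈F} Tr((A_x^a − √(V_x^a))² ρ)), where Tr₁ denotes the partial trace over the first tensor factor and x is uniform in F^n. -/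

import Mathlib

open scoped Kronecker ComplexConjugate ComplexOrder Matrix

namespace MIP

noncomputable section

abbrev Mat (d : ℕ) := Matrix (Fin d) (Fin d) ℂ

/-- Real part of the trace. -/
def rTr {m : Type*} [Fintype m] (M : Matrix m m ℂ) : ℝ := M.trace.re

/-- Positive semidefinite square root (`0` if the matrix is not PSD). -/
def psqrt {m : Type*} [Fintype m] [DecidableEq m] (A : Matrix m m ℂ) : Matrix m m ℂ :=
  letI := Classical.propDecidable A.PosSemidef
  if h : A.PosSemidef then
    (h.1.eigenvectorUnitary : Matrix m m ℂ) *
      Matrix.diagonal ((↑) ∘ (√·) ∘ h.1.eigenvalues) *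
      (star h.1.eigenvectorUnitary : Matrix m m ℂ)
  else 0

/-- Loewner order `A ≤ B`. -/
def PSDle {m : Type*} [Fintype m] (A B : Matrix m m ℂ) : Prop := (B - A).PosSemidef

/-- Trace norm of a square complex matrix. -/
def traceNorm {m : Type*} [Fintype m] [DecidableEq m] (M : Matrix m m ℂ) : ℝ :=
  rTr (psqrt (Mᴴ * M))

/-- `‖X‖_ρ² = Tr (X Xᴴ ρ)`. -/
def rhoNormSq {d : ℕ} (ρ X : Mat d) : ℝ := rTr (X * Xᴴ * ρ)

/-- `⟨ψ| M 0 ⊗ ⋯ ⊗ M (r-1) |ψ⟩` (real part). -/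
def tExp {r d : ℕ} (ψ : (Fin r → Fin d) → ℂ) (M : Fin r → Mat d) : ℝ :=
  (∑ v : Fin r → Fin d, ∑ w : Fin r → Fin d,
      conj (ψ v) * (∏ i, M i (v i) (w i)) * ψ w).re

/-- `⟨ψ| M 0 ⊗ ⋯ ⊗ M (r-1) |ψ⟩` (complex value). -/
def tExpC {r d : ℕ} (ψ : (Fin r → Fin d) → ℂ) (M : Fin r → Mat d) : ℂ :=
  ∑ v : Fin r → Fin d, ∑ w : Fin r → Fin d,
      conj (ψ v) * (∏ i, M i (v i) (w i)) * ψ w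

/-- Invariance of a vector in `(ℂ^d)^{⊗r}` under all permutations of the factors. -/
def PermInvariant {r d : ℕ} (ψ : (Fin r → Fin d) → ℂ) : Prop :=
  ∀ σ : Equiv.Perm (Fin r), ∀ v, ψ (v ∘ σ) = ψ v

/-- Reduced density matrix of `|ψ⟩⟨ψ|` on register `i`. -/
def red1 {r d : ℕ} (ψ : (Fin r → Fin d) → ℂ) (i : Fin r) : Mat d :=
  Matrix.of fun j k => ∑ v : Fin r → Fin d,
    if (v i).val = 0 then ψ (Function.update v i j) * conj (ψ (Function.update v i k)) else 0

/-- Reduced density matrix of `|ψ⟩⟨ψ|` on registers `i₁, i₂`. -/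
def red2 {r d : ℕ} (ψ : (Fin r → Fin d) → ℂ) (i₁ i₂ : Fin r) :
    Matrix (Fin d × Fin d) (Fin d × Fin d) ℂ :=
  Matrix.of fun a b => ∑ v : Fin r → Fin d,
    if (v i₁).val = 0 ∧ (v i₂).val = 0 then
      ψ (Function.update (Function.update v i₁ a.1) i₂ a.2) *
        conj (ψ (Function.update (Function.update v i₁ b.1) i₂ b.2))
    else 0

/-- A symmetric projective strategy with `r` provers, questions in `F^n`,
answers in `F`, on local dimension `d`. -/
structure Strategy (r n d : ℕ) (F : Type*) [Field F] [Fintype F] where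
  ψ : (Fin r → Fin d) → ℂ
  A : (Fin n → F) → F → Mat d
  unit : ∑ v : Fin r → Fin d, Complex.normSq (ψ v) = 1
  perm : PermInvariant ψ
  herm : ∀ x a, (A x a).IsHermitian
  proj : ∀ x a, A x a * A x a = A x a
  complete : ∀ x, ∑ a : F, A x a = 1

variable {F : Type*} [Field F] [Fintype F] [DecidableEq F]

/-- Consistency-test acceptance probability. -/
def consProb {r n d : ℕ} (S : Strategy r n d F) : ℝ :=
  (∑ x : Fin n → F, ∑ a : F, tExp S.ψ fun _ => S.A x a) / (Fintype.card F : ℝ) ^ n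

/-- Linearity-test acceptance probability in direction `i`. -/
def linProbDir {r n d : ℕ} (S : Strategy r n d F) (i : Fin n) : ℝ :=
  (∑ x : Fin n → F, ∑ yi : F, ∑ zi : F,
      if yi ≠ x i ∧ zi ≠ x i ∧ yi ≠ zi then
        ∑ α : F, ∑ β : F,
          tExp S.ψ fun j =>
            if j.val = 0 then S.A x (α * x i + β)
            else if j.val = 1 then S.A (Function.update x i yi) (α * yi + β)
            else if j.val = 2 then S.A (Function.update x i zi) (α * zi + β)
            else 1
      else 0) /
    ((Fintype.card F : ℝ) ^ n * ((Fintype.card F : ℝ) - 1) * ((Fintype.card F : ℝ) - 2))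

/-- Linearity-test acceptance probability (averaged over the direction). -/
def linProb {r n d : ℕ} (S : Strategy r n d F) : ℝ :=
  (∑ i : Fin n, linProbDir S i) / n

/-- A multilinear function `F^k → F`. -/
def IsMultilinear {k : ℕ} (g : (Fin k → F) → F) : Prop :=
  ∀ (i : Fin k) (x : Fin k → F), ∃ α β : F, ∀ t : F, g (Function.update x i t) = α * t + β

/-- First `k` coordinates `x_{≤k}`. -/
def xle {n k : ℕ} (hk : k ≤ n) (x : Fin n → F) : Fin k → F :=
  fun j => x (Fin.castLE hk j)

/-- Last `n - k` coordinates `x_{>k}`. -/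
def xgt {n : ℕ} (k : ℕ) (hk : k ≤ n) (x : Fin n → F) : Fin (n - k) → F :=
  fun j => x ⟨k + j.val, by have := j.isLt; omega⟩

/-- The restriction `g(·, x_{k+1},…,x_ℓ)` of `g : F^ℓ → F` to its first `k` variables, the last
`ℓ - k` variables being substituted with the corresponding coordinates of `x ∈ F^n`. -/
def midRestrict {n k ℓ : ℕ} (hkl : k ≤ ℓ) (hl : ℓ ≤ n) (g : (Fin ℓ → F) → F) (x : Fin n → F) :
    (Fin k → F) → F :=
  fun u => g fun j =>
    if h : j.val < k then u ⟨j.val, h⟩ else x ⟨j.val, by have := j.isLt; omega⟩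

/-- A family of sub-measurements of arity `k`, with outcomes the multilinear functions
`F^k → F` (the matrices are indexed by all functions, vanishing on non-multilinear ones). -/
structure SubFamily (n d : ℕ) (F : Type*) [Field F] [Fintype F] [DecidableEq F] (k : ℕ) where
  P : (Fin (n - k) → F) → ((Fin k → F) → F) → Mat d
  psd : ∀ y g, (P y g).PosSemidef
  ml : ∀ y g, ¬ IsMultilinear g → P y g = 0
  sub : ∀ y, (1 - ∑ g : (Fin k → F) → F, P y g).PosSemidef

/-- `cons(P,Q)` for arities `k ≤ ℓ`. -/
def consF {n d k ℓ : ℕ} (hkl : k ≤ ℓ) (hl : ℓ ≤ n)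
    (P : SubFamily n d F k) (Q : SubFamily n d F ℓ)
    (ρ : Matrix (Fin d × Fin d) (Fin d × Fin d) ℂ) : ℝ :=
  (∑ x : Fin n → F, ∑ f : (Fin k → F) → F, ∑ g : (Fin ℓ → F) → F,
      if f = midRestrict hkl hl g x then
        rTr ((P.P (xgt k (hkl.trans hl) x) f ⊗ₖ Q.P (xgt ℓ hl x) g) * ρ)
      else 0) / (Fintype.card F : ℝ) ^ n

/-- `inc(P,Q)` for arities `k ≤ ℓ`. -/
def incF {n d k ℓ : ℕ} (hkl : k ≤ ℓ) (hl : ℓ ≤ n)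
    (P : SubFamily n d F k) (Q : SubFamily n d F ℓ)
    (ρ : Matrix (Fin d × Fin d) (Fin d × Fin d) ℂ) : ℝ :=
  (∑ x : Fin n → F, ∑ f : (Fin k → F) → F, ∑ g : (Fin ℓ → F) → F,
      if f ≠ midRestrict hkl hl g x then
        rTr ((P.P (xgt k (hkl.trans hl) x) f ⊗ₖ Q.P (xgt ℓ hl x) g) * ρ)
      else 0) / (Fintype.card F : ℝ) ^ n

/-- `cons(P,Q)` for arbitrary arities (symmetric convention). -/
def consSym {n d k ℓ : ℕ} (hk : k ≤ n) (hl : ℓ ≤ n)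
    (P : SubFamily n d F k) (Q : SubFamily n d F ℓ)
    (ρ : Matrix (Fin d × Fin d) (Fin d × Fin d) ℂ) : ℝ :=
  if h : k ≤ ℓ then consF h hl P Q ρ else consF (le_of_not_ge h) hk Q P ρ

/-- `inc(P,A)` where `A` are the strategy's measurements (regarded as the arity-0 family). -/
def incA {n d k : ℕ} (hk : k ≤ n) (P : SubFamily n d F k)
    (A : (Fin n → F) → F → Mat d) (ρ : Matrix (Fin d × Fin d) (Fin d × Fin d) ℂ) : ℝ :=
  (∑ x : Fin n → F, ∑ g : (Fin k → F) → F, ∑ a : F,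
      if a ≠ g (xle hk x) then rTr ((P.P (xgt k hk x) g ⊗ₖ A x a) * ρ) else 0) /
    (Fintype.card F : ℝ) ^ n

/-- `Tr_ρ(P)` for a family of sub-measurements, against the one-register density `ρ`. -/
def trF {n d k : ℕ} (P : SubFamily n d F k) (ρ : Mat d) : ℝ :=
  (∑ y : Fin (n - k) → F, ∑ g : (Fin k → F) → F, rTr (P.P y g * ρ)) /
    (Fintype.card F : ℝ) ^ (n - k)

/-- Merge first `k` coordinates `u` and last `n - k` coordinates `y` into a point of `F^n`. -/
def merge {n k : ℕ} (hk : k ≤ n) (u : Fin k → F) (y : Fin (n - k) → F) : Fin n → F :=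
  fun j => if h : j.val < k then u ⟨j.val, h⟩ else y ⟨j.val - k, by have := j.isLt; omega⟩

/-- `E_{x_{≤k}} Ŝ_x^g`, with the last coordinates fixed to `y`. -/
def avgLow {n d k : ℕ} (hk : k ≤ n)
    (Sh : (Fin n → F) → ((Fin k → F) → F) → Mat d)
    (y : Fin (n - k) → F) (g : (Fin k → F) → F) : Mat d :=
  ((Fintype.card F : ℂ) ^ k)⁻¹ • ∑ u : Fin k → F, Sh (merge hk u y) g

/-- Feasibility for the self-improvement convex program. -/
def Feasible {n d k : ℕ} (hk : k ≤ n) (A : (Fin n → F) → F → Mat d)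
    (Sh : (Fin n → F) → ((Fin k → F) → F) → Mat d) : Prop :=
  (∀ x g, ¬ IsMultilinear g → Sh x g = 0) ∧
    ∀ x a, PSDle (∑ g : (Fin k → F) → F,
      if g (xle hk x) = a then Sh x g * (Sh x g)ᴴ else 0) (A x a)

/-- Objective of the self-improvement convex program. -/
def objective {n d k : ℕ} (hk : k ≤ n) (R : SubFamily n d F k) (ρ : Mat d)
    (Sh : (Fin n → F) → ((Fin k → F) → F) → Mat d) : ℝ :=
  (∑ x : Fin n → F, ∑ g : (Fin k → F) → F,
      rhoNormSq ρ (Sh x g - psqrt (R.P (xgt k hk x) g))) / (Fintype.card F : ℝ) ^ n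

/-- Optimum value `ω` of the self-improvement convex program. -/
def progOpt {n d k : ℕ} (hk : k ≤ n) (A : (Fin n → F) → F → Mat d)
    (R : SubFamily n d F k) (ρ : Mat d) : ℝ :=
  sInf {w | ∃ Sh, Feasible hk A Sh ∧ objective hk R ρ Sh = w}


/-- Remove the `i`-th coordinate: `x_{¬i}`. -/
def removeCoord {n : ℕ} (i : Fin n) (x : Fin n → F) : Fin (n - 1) → F :=
  fun j => if h : j.val < i.val then x ⟨j.val, by have := j.isLt; omega⟩
    else x ⟨j.val + 1, by have := j.isLt; omega⟩

/-- Partial trace over the middle factor of `ℂ^d ⊗ ℂ^d ⊗ ℂ^{d'}`. -/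
def ptrace2 {d d' : ℕ} (σ : Matrix (Fin d × Fin d × Fin d') (Fin d × Fin d × Fin d') ℂ) :
    Matrix (Fin d × Fin d') (Fin d × Fin d') ℂ :=
  Matrix.of fun a b => ∑ m : Fin d, σ (a.1, m, a.2) (b.1, m, b.2)

/-- Partial trace over the first factor of `ℂ^d ⊗ ℂ^{d'}`. -/
def ptrFst {d d' : ℕ} (σ : Matrix (Fin d × Fin d') (Fin d × Fin d') ℂ) :
    Matrix (Fin d') (Fin d') ℂ :=
  Matrix.of fun k l => ∑ m : Fin d, σ (m, k) (m, l)

/-- Partial trace over the second factor of `ℂ^d ⊗ ℂ^{d'}`. -/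
def ptrSnd {d d' : ℕ} (σ : Matrix (Fin d × Fin d') (Fin d × Fin d') ℂ) : Mat d :=
  Matrix.of fun i j => ∑ m : Fin d', σ (i, m) (j, m)

/-!
Write `B = A_x^a`, `C = √(V_x^a)` (tensored with `1` where needed) and let `U` be the sign unitary
of the Hermitian difference `Δ` of the two partial traces, so that
`‖Δ‖₁ = Re Tr (U Δ) = Re Tr ((1 ⊗ U) (B S B - C S C))`.
Splitting `B S B - C S C = (B - C) S B + C S (B - C)`, Cauchy–Schwarz for the semi-inner product
`⟪X, Y⟫ = Tr (Y S Xᴴ)` bounds the two terms by `√Tr ((B - C)² ρ)` times `√Tr (B² ρ)` and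
`√Tr (C² ρ)`; the unitary drops out because `Tr₂ S = ρ`. A second Cauchy–Schwarz over `(x, a)`,
with `Σ_a Tr (B² ρ) = 1` and `Σ_a Tr (C² ρ) ≤ 1`, produces the factor `2`.
-/

open scoped MatrixOrder

section TraceNorm

variable {m : Type*} [Fintype m] [DecidableEq m]

lemma psqrt_eq_cfcSqrt {A : Matrix m m ℂ} (hA : A.PosSemidef) : psqrt A = CFC.sqrt A := by
  rw [CFC.sqrt_eq_cfc, cfc_nnreal_eq_real _ A hA.nonneg, hA.1.cfc_eq]
  simp only [psqrt, dif_pos hA, Matrix.IsHermitian.cfc, Unitary.conjStarAlgAut_apply]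
  congr 3
  funext i
  simp [Real.coe_sqrt, Real.coe_toNNReal', max_eq_left (hA.eigenvalues_nonneg i)]

lemma posSemidef_psqrt {A : Matrix m m ℂ} (hA : A.PosSemidef) : (psqrt A).PosSemidef := by
  rw [psqrt_eq_cfcSqrt hA]
  exact Matrix.nonneg_iff_posSemidef.mp (CFC.sqrt_nonneg A)

lemma psqrt_mul_self {A : Matrix m m ℂ} (hA : A.PosSemidef) : psqrt A * psqrt A = A := by
  rw [psqrt_eq_cfcSqrt hA]
  exact CFC.sqrt_mul_sqrt_self A hA.nonneg

lemma traceNorm_eq_rTr_cfc_abs {H : Matrix m m ℂ} (hH : H.IsHermitian) :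
    traceNorm H = rTr (cfc (fun x : ℝ => |x|) H) := by
  have hHH : (Hᴴ * H).PosSemidef := Matrix.posSemidef_conjTranspose_mul_self H
  rw [traceNorm, psqrt_eq_cfcSqrt hHH, ← Matrix.star_eq_conjTranspose]
  change rTr (CFC.abs H) = _
  rw [CFC.abs_eq_cfc_norm H hH.isSelfAdjoint]
  rfl

lemma exists_unitary_traceNorm_eq {H : Matrix m m ℂ} (hH : H.IsHermitian) :
    ∃ U : Matrix m m ℂ, Uᴴ * U = 1 ∧ traceNorm H = rTr (U * H) := by
  set s : ℝ → ℝ := fun x => if 0 ≤ x then 1 else -1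
  have hs : ContinuousOn s (spectrum ℝ H) := (Matrix.finite_real_spectrum).continuousOn _
  refine ⟨cfc s H, ?_, ?_⟩
  · rw [← Matrix.star_eq_conjTranspose, (cfc_predicate s H).star_eq, ← cfc_mul s s H,
      ← cfc_one ℝ H]
    refine cfc_congr fun x _ => ?_
    by_cases hx : 0 ≤ x <;> simp [s, hx]
  · rw [traceNorm_eq_rTr_cfc_abs hH]
    have hsH : cfc s H * H = cfc (fun x => s x * x) H := by
      rw [cfc_mul s (fun x => x) H, cfc_id' ℝ H]
    rw [hsH]
    congr 1
    refine cfc_congr fun x _ => ?_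
    by_cases hx : 0 ≤ x
    · simp [s, hx, abs_of_nonneg hx]
    · simp [s, hx, abs_of_neg (lt_of_not_ge hx)]

end TraceNorm

section Trace

variable {m : Type*} [Fintype m]

lemma rTr_mul_nonneg [DecidableEq m] {P Q : Matrix m m ℂ} (hP : P.PosSemidef)
    (hQ : Q.PosSemidef) : 0 ≤ rTr (P * Q) := by
  have hR : (CFC.sqrt P)ᴴ = CFC.sqrt P := (CFC.sqrt_nonneg P).isSelfAdjoint
  have hPQ : (P * Q).trace = (CFC.sqrt P * Q * (CFC.sqrt P)ᴴ).trace := by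
    rw [hR, Matrix.trace_mul_cycle, CFC.sqrt_mul_sqrt_self P hP.nonneg]
  rw [rTr, hPQ]
  exact (Complex.nonneg_iff.mp (hQ.mul_mul_conjTranspose_same _).trace_nonneg).1

lemma rTr_mul_mul_conjTranspose_le {S : Matrix m m ℂ} (hS : S.PosSemidef) (X Y : Matrix m m ℂ) :
    rTr (Y * S * Xᴴ) ≤ √(rTr (X * S * Xᴴ)) * √(rTr (Y * S * Yᴴ)) := by
  let _ := S.toMatrixSeminormedAddCommGroup hS
  let _ := S.toMatrixInnerProductSpace hS
  exact re_inner_le_norm (𝕜 := ℂ) X Y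

lemma rTr_mul_self_mul_nonneg [DecidableEq m] {X ρ : Matrix m m ℂ}
    (hX : X.IsHermitian) (hρ : ρ.PosSemidef) : 0 ≤ rTr (X * X * ρ) :=
  rTr_mul_nonneg (by simpa only [hX.eq] using X.posSemidef_conjTranspose_mul_self) hρ

lemma sum_rTr_mul_le_one {ι : Type*} [Fintype ι] {d : ℕ} {ρ : Mat d} {P : ι → Mat d}
    (hρ : ρ.PosSemidef) (hρ1 : ρ.trace = 1) (hP : PSDle (∑ i, P i) 1) :
    ∑ i, rTr (P i * ρ) ≤ 1 := by
  have h := rTr_mul_nonneg hP hρ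
  rw [rTr, sub_mul, Matrix.trace_sub, Complex.sub_re, one_mul, hρ1, Finset.sum_mul,
    Matrix.trace_sum, Complex.re_sum] at h
  simpa only [rTr, Complex.one_re, sub_nonneg] using h

end Trace

section PartialTrace

variable {d d' : ℕ}

local notation "I'" => (1 : Matrix (Fin d') (Fin d') ℂ)

lemma trace_mul_ptrFst (U : Matrix (Fin d') (Fin d') ℂ)
    (M : Matrix (Fin d × Fin d') (Fin d × Fin d') ℂ) :
    (U * ptrFst M).trace = (((1 : Mat d) ⊗ₖ U) * M).trace := by
  simp only [Matrix.trace, Matrix.diag_apply, Matrix.mul_apply, ptrFst, Matrix.of_apply,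
    Finset.mul_sum, Matrix.kroneckerMap_apply, Matrix.one_apply, ite_mul, one_mul, zero_mul,
    Fintype.sum_prod_type, Finset.sum_ite_irrel, Finset.sum_const_zero, Finset.sum_ite_eq,
    Finset.mem_univ, ↓reduceIte]
  rw [eq_comm, Finset.sum_comm]
  exact Finset.sum_congr rfl fun _ _ => Finset.sum_comm

lemma trace_kronecker_one_mul (N : Mat d) (M : Matrix (Fin d × Fin d') (Fin d × Fin d') ℂ) :
    ((N ⊗ₖ I') * M).trace = (N * ptrSnd M).trace := by
  simp only [Matrix.trace, Matrix.diag, Matrix.mul_apply, ptrSnd, Matrix.of_apply,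
    Matrix.kroneckerMap_apply, Matrix.one_apply, Fintype.sum_prod_type, mul_ite, ite_mul,
    mul_zero, zero_mul, mul_one, Finset.mul_sum, Finset.sum_ite_eq, Finset.mem_univ, if_true]
  exact Finset.sum_congr rfl fun i _ => Finset.sum_comm

lemma ptrFst_isHermitian {M : Matrix (Fin d × Fin d') (Fin d × Fin d') ℂ}
    (hM : M.IsHermitian) : (ptrFst M).IsHermitian := by
  ext k l
  simp only [Matrix.conjTranspose_apply, ptrFst, Matrix.of_apply, star_sum]
  exact Finset.sum_congr rfl fun m _ => congrFun (congrFun hM (m, k)) (m, l)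

lemma trace_kronecker_mul_mul_conjTranspose (P : Mat d) {U : Matrix (Fin d') (Fin d') ℂ}
    (hU : Uᴴ * U = 1) (S : Matrix (Fin d × Fin d') (Fin d × Fin d') ℂ) :
    ((P ⊗ₖ U) * S * (P ⊗ₖ U)ᴴ).trace = (Pᴴ * P * ptrSnd S).trace := by
  rw [Matrix.trace_mul_cycle, Matrix.conjTranspose_kronecker, ← Matrix.mul_kronecker_mul, hU,
    trace_kronecker_one_mul]

lemma rTr_kronecker_mul_mul_le {ρ P Q : Mat d} {U : Matrix (Fin d') (Fin d') ℂ}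
    {S : Matrix (Fin d × Fin d') (Fin d × Fin d') ℂ} (hS : S.PosSemidef) (hSρ : ptrSnd S = ρ)
    (hU : Uᴴ * U = 1) (hP : P.IsHermitian) (hQ : Q.IsHermitian) :
    rTr ((P ⊗ₖ U) * S * (Q ⊗ₖ I')) ≤
      √(rTr (P * P * ρ)) * √(rTr (Q * Q * ρ)) := by
  have hQ1 : (Q ⊗ₖ I')ᴴ = Q ⊗ₖ I' := by
    rw [Matrix.conjTranspose_kronecker, hQ.eq, Matrix.conjTranspose_one]
  have hPP : rTr ((P ⊗ₖ U) * S * (P ⊗ₖ U)ᴴ) = rTr (P * P * ρ) := by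
    rw [rTr, trace_kronecker_mul_mul_conjTranspose P hU, hP.eq, hSρ, rTr]
  have hQQ : rTr ((Q ⊗ₖ I') * S * (Q ⊗ₖ I')) = rTr (Q * Q * ρ) := by
    have h := trace_kronecker_mul_mul_conjTranspose Q (U := I') (by simp) S
    rw [hQ1, hQ.eq, hSρ] at h
    rw [rTr, h, rTr]
  have h := rTr_mul_mul_conjTranspose_le hS (Q ⊗ₖ I') (P ⊗ₖ U)
  rwa [hQ1, hQQ, hPP, mul_comm (√(rTr (Q * Q * ρ)))] at h

lemma isHermitian_kronecker_one_mul_mul {S : Matrix (Fin d × Fin d') (Fin d × Fin d') ℂ}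
    (hS : S.IsHermitian) {X : Mat d} (hX : X.IsHermitian) :
    ((X ⊗ₖ I') * S * (X ⊗ₖ I')).IsHermitian := by
  have hX1 : (X ⊗ₖ I')ᴴ = X ⊗ₖ I' := by
    rw [Matrix.conjTranspose_kronecker, hX.eq, Matrix.conjTranspose_one]
  simpa only [hX1] using Matrix.isHermitian_conjTranspose_mul_mul (X ⊗ₖ I') hS

theorem traceNorm_ptrFst_sub_le {ρ B C : Mat d}
    {S : Matrix (Fin d × Fin d') (Fin d × Fin d') ℂ} (hS : S.PosSemidef) (hSρ : ptrSnd S = ρ)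
    (hB : B.IsHermitian) (hC : C.IsHermitian) :
    traceNorm (ptrFst ((B ⊗ₖ I') * S * (B ⊗ₖ I')) - ptrFst ((C ⊗ₖ I') * S * (C ⊗ₖ I'))) ≤
      √(rTr ((B - C) * (B - C) * ρ)) * (√(rTr (B * B * ρ)) + √(rTr (C * C * ρ))) := by
  have hD : (B - C).IsHermitian := hB.sub hC
  obtain ⟨U, hU, hnorm⟩ := exists_unitary_traceNorm_eq <|
    (ptrFst_isHermitian (isHermitian_kronecker_one_mul_mul hS.1 hB)).sub
      (ptrFst_isHermitian (isHermitian_kronecker_one_mul_mul hS.1 hC))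
  have hsplit : (B ⊗ₖ I') * S * (B ⊗ₖ I') - (C ⊗ₖ I') * S * (C ⊗ₖ I') =
      ((B - C) ⊗ₖ I') * S * (B ⊗ₖ I') + (C ⊗ₖ I') * S * ((B - C) ⊗ₖ I') := by
    have hBC : B ⊗ₖ I' = (B - C) ⊗ₖ I' + C ⊗ₖ I' := by
      rw [← Matrix.add_kronecker, sub_add_cancel]
    rw [hBC]
    noncomm_ring
  have hpair : ∀ X Y : Mat d, ((1 : Mat d) ⊗ₖ U) * ((X ⊗ₖ I') * S * (Y ⊗ₖ I')) =
      (X ⊗ₖ U) * S * (Y ⊗ₖ I') := fun X Y => by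
    rw [← mul_assoc, ← mul_assoc, ← Matrix.mul_kronecker_mul, one_mul, mul_one]
  have htrace : rTr (U * (ptrFst ((B ⊗ₖ I') * S * (B ⊗ₖ I')) -
      ptrFst ((C ⊗ₖ I') * S * (C ⊗ₖ I')))) =
      rTr (((B - C) ⊗ₖ U) * S * (B ⊗ₖ I')) + rTr ((C ⊗ₖ U) * S * ((B - C) ⊗ₖ I')) := by
    rw [rTr, mul_sub, Matrix.trace_sub, trace_mul_ptrFst, trace_mul_ptrFst, ← Matrix.trace_sub,
      ← mul_sub, hsplit, mul_add, hpair, hpair, Matrix.trace_add, Complex.add_re, rTr, rTr]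
  calc _ = _ := hnorm.trans htrace
    _ ≤ √(rTr ((B - C) * (B - C) * ρ)) * √(rTr (B * B * ρ)) +
          √(rTr (C * C * ρ)) * √(rTr ((B - C) * (B - C) * ρ)) :=
        add_le_add (rTr_kronecker_mul_mul_le hS hSρ hU hD hB)
          (rTr_kronecker_mul_mul_le hS hSρ hU hC hD)
    _ = _ := by ring

end PartialTrace

lemma sum_le_two_mul_sqrt_mul_sqrt {ι : Type*} [Fintype ι] {e t s s' : ι → ℝ} {N : ℝ}
    (he : ∀ i, e i ≤ √(t i) * (√(s i) + √(s' i))) (ht : ∀ i, 0 ≤ t i) (hs : ∀ i, 0 ≤ s i)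
    (hs' : ∀ i, 0 ≤ s' i) (hsN : ∑ i, s i ≤ N) (hs'N : ∑ i, s' i ≤ N) :
    ∑ i, e i ≤ 2 * (√(∑ i, t i) * √N) := by
  calc ∑ i, e i ≤ ∑ i, √(t i) * √(s i) + ∑ i, √(t i) * √(s' i) := by
        rw [← Finset.sum_add_distrib]
        exact Finset.sum_le_sum fun i _ => (he i).trans_eq (mul_add _ _ _)
    _ ≤ √(∑ i, t i) * √(∑ i, s i) + √(∑ i, t i) * √(∑ i, s' i) :=
        add_le_add (Real.sum_sqrt_mul_sqrt_le _ ht hs) (Real.sum_sqrt_mul_sqrt_le _ ht hs')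
    _ ≤ √(∑ i, t i) * √N + √(∑ i, t i) * √N := by gcongr
    _ = 2 * (√(∑ i, t i) * √N) := by ring

lemma average_sum_le_two_mul_sqrt {α β : Type*} [Fintype α] [Fintype β]
    {e t s s' : α → β → ℝ} (he : ∀ x a, e x a ≤ √(t x a) * (√(s x a) + √(s' x a)))
    (ht : ∀ x a, 0 ≤ t x a) (hs : ∀ x a, 0 ≤ s x a) (hs' : ∀ x a, 0 ≤ s' x a)
    (hs1 : ∀ x, ∑ a, s x a ≤ 1) (hs'1 : ∀ x, ∑ a, s' x a ≤ 1) :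
    (∑ x, ∑ a, e x a) / Fintype.card α ≤ 2 * √((∑ x, ∑ a, t x a) / Fintype.card α) := by
  have hsum_le : ∀ f : α → β → ℝ, (∀ x, ∑ a, f x a ≤ 1) →
      ∑ p : α × β, f p.1 p.2 ≤ Fintype.card α := fun f hf => by
    rw [Fintype.sum_prod_type]
    simpa using Finset.sum_le_sum fun x (_ : x ∈ Finset.univ) => hf x
  have h := sum_le_two_mul_sqrt_mul_sqrt (ι := α × β) (fun p => he p.1 p.2)
    (fun p => ht p.1 p.2) (fun p => hs p.1 p.2) (fun p => hs' p.1 p.2) (hsum_le s hs1)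
    (hsum_le s' hs'1)
  simp only [Fintype.sum_prod_type] at h
  have hT : 0 ≤ ∑ x, ∑ a, t x a :=
    Finset.sum_nonneg fun x _ => Finset.sum_nonneg fun a _ => ht x a
  rcases (Nat.cast_nonneg (α := ℝ) (Fintype.card α)).eq_or_lt with hN | hN
  · rw [← hN, div_zero, div_zero, Real.sqrt_zero, mul_zero]
  · have hsqrt : √((∑ x, ∑ a, t x a) / Fintype.card α) * Fintype.card α =
        √(∑ x, ∑ a, t x a) * √(Fintype.card α) := by
      rw [Real.sqrt_div hT, div_mul_eq_mul_div, mul_div_assoc, Real.div_sqrt]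
    rwa [div_le_iff₀ hN, mul_assoc, hsqrt]

theorem statement19_general (F : Type) [Fintype F] (n d d' : ℕ)
    (ρ : Mat d)
    (σ : (Fin n → F) → Matrix (Fin d × Fin d') (Fin d × Fin d') ℂ)
    (A V : (Fin n → F) → F → Mat d)
    (hρ : ρ.PosSemidef) (hρ1 : ρ.trace = 1)
    (hσ : ∀ x, (σ x).PosSemidef) (hσρ : ∀ x, ptrSnd (σ x) = ρ)
    (hAh : ∀ x a, (A x a).IsHermitian) (hAp : ∀ x a, A x a * A x a = A x a)
    (hAc : ∀ x, ∑ a : F, A x a = 1)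
    (hV : ∀ x a, (V x a).PosSemidef) (hVs : ∀ x, PSDle (∑ a : F, V x a) 1) :
    (∑ x : Fin n → F, ∑ a : F,
        traceNorm (ptrFst ((A x a ⊗ₖ (1 : Matrix (Fin d') (Fin d') ℂ)) * σ x *
              (A x a ⊗ₖ (1 : Matrix (Fin d') (Fin d') ℂ))) -
            ptrFst ((psqrt (V x a) ⊗ₖ (1 : Matrix (Fin d') (Fin d') ℂ)) * σ x *
              (psqrt (V x a) ⊗ₖ (1 : Matrix (Fin d') (Fin d') ℂ))))) /
        (Fintype.card F : ℝ) ^ n ≤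
      2 * Real.sqrt ((∑ x : Fin n → F, ∑ a : F,
          rTr ((A x a - psqrt (V x a)) * (A x a - psqrt (V x a)) * ρ)) /
        (Fintype.card F : ℝ) ^ n) := by
  have hsqrtV : ∀ x a, (psqrt (V x a)).IsHermitian := fun x a => (posSemidef_psqrt (hV x a)).1
  have hcard : (Fintype.card F : ℝ) ^ n = Fintype.card (Fin n → F) := by simp
  rw [hcard]
  refine average_sum_le_two_mul_sqrt
    (fun x a => traceNorm_ptrFst_sub_le (hσ x) (hσρ x) (hAh x a) (hsqrtV x a))
    (fun x a => rTr_mul_self_mul_nonneg ((hAh x a).sub (hsqrtV x a)) hρ)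
    (fun x a => rTr_mul_self_mul_nonneg (hAh x a) hρ)
    (fun x a => rTr_mul_self_mul_nonneg (hsqrtV x a) hρ) (fun x => ?_) (fun x => ?_)
  · have hA1 : PSDle (∑ a, A x a) 1 := by
      rw [PSDle, hAc x, sub_self]
      exact .zero
    simpa only [hAp] using sum_rTr_mul_le_one hρ hρ1 hA1
  · simpa only [psqrt_mul_self (hV x _)] using sum_rTr_mul_le_one hρ hρ1 (hVs x)

theorem statement19 (F : Type) [Field F] [Fintype F] [DecidableEq F] (n d d' : ℕ)
    (ρ : Mat d)
    (σ : (Fin n → F) → Matrix (Fin d × Fin d') (Fin d × Fin d') ℂ)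
    (A V : (Fin n → F) → F → Mat d)
    (hn : 1 ≤ n) (hd : 1 ≤ d) (hd' : 1 ≤ d')
    (hρ : ρ.PosSemidef) (hρ1 : ρ.trace = 1)
    (hσ : ∀ x, (σ x).PosSemidef) (hσρ : ∀ x, ptrSnd (σ x) = ρ)
    (hAh : ∀ x a, (A x a).IsHermitian) (hAp : ∀ x a, A x a * A x a = A x a)
    (hAc : ∀ x, ∑ a : F, A x a = 1)
    (hV : ∀ x a, (V x a).PosSemidef) (hVs : ∀ x, PSDle (∑ a : F, V x a) 1) :
    (∑ x : Fin n → F, ∑ a : F,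
        traceNorm (ptrFst ((A x a ⊗ₖ (1 : Matrix (Fin d') (Fin d') ℂ)) * σ x *
              (A x a ⊗ₖ (1 : Matrix (Fin d') (Fin d') ℂ))) -
            ptrFst ((psqrt (V x a) ⊗ₖ (1 : Matrix (Fin d') (Fin d') ℂ)) * σ x *
              (psqrt (V x a) ⊗ₖ (1 : Matrix (Fin d') (Fin d') ℂ))))) /
        (Fintype.card F : ℝ) ^ n ≤
      2 * Real.sqrt ((∑ x : Fin n → F, ∑ a : F,
          rTr ((A x a - psqrt (V x a)) * (A x a - psqrt (V x a)) * ρ)) /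
        (Fintype.card F : ℝ) ^ n) :=
  statement19_general F n d d' ρ σ A V hρ hρ1 hσ hσρ hAh hAp hAc hV hVs

end

end MIP
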